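/- The Wiener index of the onion graph On(k,l,m) equals k^2 + 7k + 8 + (l^3 - l)/6 + m^2 + m·(l^2 + l - 2)/2 + (k+3)·((l^2 - l)/2 + m·l) + (l + m - 1)·(3k + 4). -/
import Mathlib


/-- The Wiener index of a graph: the sum of distances over all unordered pairs of vertices. -/
noncomputable def wienerIndex {V : Type*} [Fintype V] (G : SimpleGraph V) : ℕ :=
  (∑ u : V, ∑ v : V, G.dist u v) / 2

/-- The transmission of a vertex: the sum of distances from it to all other vertices. -/
noncomputable def transmission {V : Type*} [Fintype V] (G : SimpleGraph V) (x : V) : ℕ :=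
  ∑ u : V, G.dist x u

/-- The onion graph `On(k,l,m)`: a 4-cycle with antipodal vertices `u, v`,
`k` pendant edges attached at `v`, a path on `l` vertices one of whose endpoints
is identified with `u`, and `m` pendant edges attached to the other endpoint of
the path.  Vertices: `Sum.inl 0 = v`, `Sum.inl 1, Sum.inl 2` the two other cycle
vertices, `Sum.inr (Sum.inl i)` the path vertices (with `u` the path vertex `0`
and `u_l` the path vertex `l-1`), `Sum.inr (Sum.inr (Sum.inl _))` the `k`
pendants at `v`, and `Sum.inr (Sum.inr (Sum.inr _))` the `m` pendants at `u_l`. -/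
def onionGraph (k l m : ℕ) : SimpleGraph (Fin 3 ⊕ Fin l ⊕ Fin k ⊕ Fin m) :=
  SimpleGraph.fromRel (fun a b =>
    match a, b with
    | Sum.inl i, Sum.inl j => i = 0 ∧ j ≠ 0
    | Sum.inl i, Sum.inr (Sum.inl p) => i ≠ 0 ∧ (p : ℕ) = 0
    | Sum.inl i, Sum.inr (Sum.inr (Sum.inl _)) => i = 0
    | Sum.inr (Sum.inl p), Sum.inr (Sum.inl q) => (p : ℕ) + 1 = (q : ℕ)
    | Sum.inr (Sum.inl p), Sum.inr (Sum.inr (Sum.inr _)) => (p : ℕ) = l - 1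
    | _, _ => False)

def OD (k l m : ℕ) : (Fin 3 ⊕ Fin l ⊕ Fin k ⊕ Fin m) → (Fin 3 ⊕ Fin l ⊕ Fin k ⊕ Fin m) → ℕ
  | .inl i, .inl j => if i = j then 0 else if i = 0 ∨ j = 0 then 1 else 2
  | .inl i, .inr (.inl p) => (if i = 0 then 2 else 1) + (p : ℕ)
  | .inl i, .inr (.inr (.inl _)) => if i = 0 then 1 else 2
  | .inl i, .inr (.inr (.inr _)) => (if i = 0 then 2 else 1) + l
  | .inr (.inl p), .inl i => (if i = 0 then 2 else 1) + (p : ℕ)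
  | .inr (.inl p), .inr (.inl q) => ((p:ℕ) - (q:ℕ)) + ((q:ℕ) - (p:ℕ))
  | .inr (.inl p), .inr (.inr (.inl _)) => (p:ℕ) + 3
  | .inr (.inl p), .inr (.inr (.inr _)) => l - (p:ℕ)
  | .inr (.inr (.inl _)), .inl i => if i = 0 then 1 else 2
  | .inr (.inr (.inl _)), .inr (.inl p) => (p:ℕ) + 3
  | .inr (.inr (.inl a)), .inr (.inr (.inl b)) => if a = b then 0 else 2
  | .inr (.inr (.inl _)), .inr (.inr (.inr _)) => l + 3
  | .inr (.inr (.inr _)), .inl i => (if i = 0 then 2 else 1) + l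
  | .inr (.inr (.inr _)), .inr (.inl p) => l - (p:ℕ)
  | .inr (.inr (.inr _)), .inr (.inr (.inl _)) => l + 3
  | .inr (.inr (.inr a)), .inr (.inr (.inr b)) => if a = b then 0 else 2

lemma OD_lip (k l m : ℕ) (hl : 1 ≤ l) (x a b : Fin 3 ⊕ Fin l ⊕ Fin k ⊕ Fin m)
    (h : (onionGraph k l m).Adj a b) : OD k l m a x ≤ OD k l m b x + 1 := by
  simp only [onionGraph, SimpleGraph.fromRel_adj] at h
  obtain ⟨hne, hr⟩ := h
  rcases a with ⟨i,hi⟩ | ⟨p,hp⟩ | a' | b' <;> rcases b with ⟨j,hj⟩ | ⟨q,hq⟩ | c' | d' <;>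
    simp only at hr <;>
    rcases x with ⟨w,hw⟩ | ⟨s,hs⟩ | t | u <;>
    simp only [OD] <;>
    (try (exfalso; simp at hr; done)) <;>
    (try simp only [Fin.ext_iff, Fin.val_zero, Fin.val_mk] at hr) <;>
    (try simp only [Fin.ext_iff, Fin.val_zero, Fin.val_mk]) <;>
    (try split_ifs) <;> (try simp_all) <;> omega

section Walks
variable {k l m : ℕ}

abbrev OV (k l m : ℕ) := Fin 3 ⊕ Fin l ⊕ Fin k ⊕ Fin m
def cyc (i : Fin 3) : OV k l m := .inl i
def pth (p : Fin l) : OV k l m := .inr (.inl p)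
def pnk (a : Fin k) : OV k l m := .inr (.inr (.inl a))
def pnm (b : Fin m) : OV k l m := .inr (.inr (.inr b))

variable (hl : 1 ≤ l)

local notation "G" => onionGraph k l m

lemma adj_cyc {i j : Fin 3} (h : i = 0 ∧ j ≠ 0) : (G).Adj (cyc i) (cyc j) := by
  refine ⟨?_, Or.inl h⟩
  simp only [cyc, ne_eq, Sum.inl.injEq]
  rintro rfl
  exact h.2 h.1

lemma adj_cyc_pth {i : Fin 3} {p : Fin l} (h : i ≠ 0 ∧ (p : ℕ) = 0) :
    (G).Adj (cyc i) (pth p) := ⟨by simp [cyc, pth], Or.inl h⟩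

lemma adj_cyc_pnk {a : Fin k} : (G).Adj (cyc 0) (pnk a) := ⟨by simp [cyc, pnk], Or.inl rfl⟩

lemma adj_pth {p q : Fin l} (h : (p : ℕ) + 1 = (q : ℕ)) : (G).Adj (pth p) (pth q) := by
  refine ⟨?_, Or.inl h⟩
  simp only [pth, ne_eq, Sum.inr.injEq, Sum.inl.injEq, Fin.ext_iff]
  omega

lemma adj_pth_pnm {p : Fin l} {b : Fin m} (h : (p : ℕ) = l - 1) :
    (G).Adj (pth p) (pnm b) := ⟨by simp [pth, pnm], Or.inl h⟩

lemma spine_walk : ∀ (d : ℕ) (p q : Fin l), (q : ℕ) = (p : ℕ) + d →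
    ∃ w : (G).Walk (pth p) (pth q), w.length = d := by
  intro d
  induction d with
  | zero =>
    intro p q h
    have : p = q := Fin.ext (by omega)
    subst this
    exact ⟨.nil, rfl⟩
  | succ n ih =>
    intro p q h
    have hq := q.isLt
    have hp1 : (p : ℕ) + 1 < l := by omega
    obtain ⟨w, hw⟩ := ih ⟨p + 1, hp1⟩ q (by simp; omega)
    exact ⟨.cons (adj_pth (by simp)) w, by simp [hw]⟩

lemma dist_pth_le {p q : Fin l} (h : (p : ℕ) ≤ (q : ℕ)) :
    (G).dist (pth p) (pth q) ≤ (q : ℕ) - (p : ℕ) := by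
  obtain ⟨w, hw⟩ := spine_walk ((q : ℕ) - (p : ℕ)) p q (by omega)
  exact hw ▸ SimpleGraph.dist_le w

lemma reach_pth_cyc1 (hl : 1 ≤ l) (p : Fin l) : (G).Reachable (pth p) (cyc 1) := by
  obtain ⟨w, -⟩ := spine_walk (p : ℕ) ⟨0, by omega⟩ p (by simp)
  have h0 : (G).Adj (cyc 1) (pth (⟨0, by omega⟩ : Fin l)) :=
    adj_cyc_pth ⟨by decide, by simp⟩
  exact (SimpleGraph.Walk.cons h0 w).reverse.reachable

lemma reach_cyc1 (hl : 1 ≤ l) : ∀ x : OV k l m, (G).Reachable x (cyc 1) := by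
  have a01 : (G).Adj (cyc (0 : Fin 3)) (cyc 1) := adj_cyc ⟨rfl, by decide⟩
  have a02 : (G).Adj (cyc (0 : Fin 3)) (cyc 2) := adj_cyc ⟨rfl, by decide⟩
  intro x
  rcases x with i | p | a | b
  · fin_cases i
    · exact a01.reachable
    · rfl
    · exact a02.symm.reachable.trans a01.reachable
  · exact reach_pth_cyc1 hl p
  · exact (adj_cyc_pnk (a := a)).symm.reachable.trans a01.reachable
  · have hlast : ((⟨l - 1, by omega⟩ : Fin l) : ℕ) = l - 1 := rfl
    exact ((adj_pth_pnm (p := ⟨l - 1, by omega⟩) (b := b) hlast).symm.reachable).trans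
      (reach_pth_cyc1 hl _)

lemma onion_conn (hl : 1 ≤ l) : (G).Connected := by
  rw [SimpleGraph.connected_iff]
  exact ⟨fun x y => (reach_cyc1 hl x).trans (reach_cyc1 hl y).symm, ⟨cyc 1⟩⟩

lemma OD_comm (x y : OV k l m) : OD k l m x y = OD k l m y x := by
  rcases x with i | p | a | b <;> rcases y with j | q | c | d <;> simp only [OD] <;>
    (try split_ifs) <;> (try simp_all) <;> omega

lemma dist_le_OD (hl : 1 ≤ l) (x y : OV k l m) : (G).dist x y ≤ OD k l m x y := by
  have tri : ∀ u v w : OV k l m, (G).dist u w ≤ (G).dist u v + (G).dist v w :=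
    fun _ _ _ => (onion_conn hl).dist_triangle
  have ale : ∀ {x y : OV k l m}, (G).Adj x y → (G).dist x y ≤ 1 := fun h =>
    SimpleGraph.dist_le (.cons h .nil)
  have dcomm : ∀ u v : OV k l m, (G).dist u v = (G).dist v u :=
    fun _ _ => SimpleGraph.dist_comm
  have dself : ∀ x : OV k l m, (G).dist x x = 0 := fun _ => SimpleGraph.dist_self
  have d01 : (G).dist (cyc 0) (cyc 1) ≤ 1 := ale (adj_cyc ⟨rfl, by decide⟩)
  have d02 : (G).dist (cyc 0) (cyc 2) ≤ 1 := ale (adj_cyc ⟨rfl, by decide⟩)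
  have d12 : (G).dist (cyc 1) (cyc 2) ≤ 2 := by
    have := tri (cyc 1) (cyc 0) (cyc 2)
    have h10 := dcomm (cyc 1) (cyc 0)
    omega
  -- distance from any cycle vertex to a path vertex
  have hcp : ∀ (i : Fin 3) (p : Fin l), (G).dist (cyc i) (pth p) ≤ (if i = 0 then 2 else 1) + p := by
    intro i p
    have h1 : ∀ j : Fin 3, j ≠ 0 → (G).dist (cyc j) (pth p) ≤ 1 + (p : ℕ) := by
      intro j hj
      refine le_trans (tri _ (pth ⟨0, by omega⟩) _) ?_
      exact add_le_add (ale (adj_cyc_pth ⟨hj, by simp⟩)) (dist_pth_le (by simp))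
    by_cases hi : i = 0
    · subst hi
      simp only [reduceIte]
      have h2 := h1 1 (by decide)
      have h3 := tri (cyc 0) (cyc 1) (pth p)
      omega
    · rw [if_neg hi]
      exact h1 i hi
  have hlast : ((⟨l - 1, by omega⟩ : Fin l) : ℕ) = l - 1 := rfl
  have hpm : ∀ (p : Fin l) (b : Fin m), (G).dist (pth p) (pnm b) ≤ l - (p : ℕ) := by
    intro p b
    have hp := p.isLt
    refine le_trans (tri _ (pth ⟨l - 1, by omega⟩) _) ?_
    have h1 := dist_pth_le (k := k) (m := m) (p := p) (q := (⟨l - 1, by omega⟩ : Fin l)) (by simp; omega)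
    have h2 := ale (adj_pth_pnm (p := (⟨l - 1, by omega⟩ : Fin l)) (b := b) hlast)
    simp only [hlast] at h1
    omega
  have hcm : ∀ (i : Fin 3) (b : Fin m), (G).dist (cyc i) (pnm b) ≤ (if i = 0 then 2 else 1) + l := by
    intro i b
    refine le_trans (tri _ (pth ⟨l - 1, by omega⟩) _) ?_
    have h1 := hcp i ⟨l - 1, by omega⟩
    have h2 := hpm ⟨l - 1, by omega⟩ b
    simp only [hlast] at h1 h2
    split_ifs at h1 ⊢ <;> omega
  have hck : ∀ (i : Fin 3) (a : Fin k), (G).dist (cyc i) (pnk a) ≤ if i = 0 then 1 else 2 := by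
    intro i a
    have h0 : (G).dist (cyc 0) (pnk a) ≤ 1 := ale (adj_cyc_pnk (a := a))
    by_cases hi : i = 0
    · subst hi; simp only [reduceIte]; exact h0
    · rw [if_neg hi]
      refine le_trans (tri _ (cyc 0) _) ?_
      have h1 : (G).dist (cyc i) (cyc 0) ≤ 1 := by
        rw [dcomm]
        fin_cases i
        · exact absurd rfl hi
        · exact d01
        · exact d02
      omega
  have hpk : ∀ (p : Fin l) (a : Fin k), (G).dist (pth p) (pnk a) ≤ (p : ℕ) + 3 := by
    intro p a
    refine le_trans (tri _ (cyc 0) _) ?_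
    have h1 := hcp 0 p
    have h2 := hck 0 a
    simp only [reduceIte] at h1 h2
    have hc := dcomm (pth p) (cyc 0)
    omega
  have hkm : ∀ (a : Fin k) (b : Fin m), (G).dist (pnk a) (pnm b) ≤ l + 3 := by
    intro a b
    refine le_trans (tri _ (cyc 0) _) ?_
    have h1 := hck 0 a
    have h2 := hcm 0 b
    simp only [reduceIte] at h1 h2
    have hc := dcomm (pnk a) (cyc 0)
    omega
  have hcy : ∀ i j : Fin 3, (G).dist (cyc i) (cyc j) ≤
      if i = j then 0 else if i = 0 ∨ j = 0 then 1 else 2 := by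
    intro i j
    fin_cases i <;> fin_cases j
    · exact (dself _).le.trans (by decide)
    · exact le_trans d01 (by decide)
    · exact le_trans d02 (by decide)
    · exact le_trans (le_trans (le_of_eq (dcomm _ _)) d01) (by decide)
    · exact (dself _).le.trans (by decide)
    · exact le_trans d12 (by decide)
    · exact le_trans (le_trans (le_of_eq (dcomm _ _)) d02) (by decide)
    · exact le_trans (le_trans (le_of_eq (dcomm _ _)) d12) (by decide)
    · exact (dself _).le.trans (by decide)
  rcases x with i | p | a | b <;> rcases y with j | q | c | d
  · exact hcy i j
  · exact hcp i q
  · exact hck i c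
  · exact hcm i d
  · exact le_trans (le_of_eq (dcomm _ _)) (hcp j p)
  · show (G).dist (pth p) (pth q) ≤ ((p : ℕ) - (q : ℕ)) + ((q : ℕ) - (p : ℕ))
    rcases le_or_gt (p : ℕ) (q : ℕ) with h | h
    · have := dist_pth_le (k := k) (m := m) (p := p) (q := q) h; omega
    · have := dist_pth_le (k := k) (m := m) (p := q) (q := p) (le_of_lt h)
      have hc := dcomm (pth p) (pth q)
      omega
  · exact hpk p c
  · exact hpm p d
  · exact le_trans (le_of_eq (dcomm _ _)) (hck j a)
  · exact le_trans (le_of_eq (dcomm _ _)) (hpk q a)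
  · simp only [OD]
    by_cases hac : a = c
    · subst hac; simp [dself]
    · rw [if_neg hac]
      show (G).dist (pnk a) (pnk c) ≤ 2
      refine le_trans (tri _ (cyc 0) _) ?_
      have h1 := hck 0 a
      have h2 := hck 0 c
      simp only [reduceIte] at h1 h2
      have hc := dcomm (pnk a) (cyc 0)
      omega
  · exact hkm a d
  · exact le_trans (le_of_eq (dcomm _ _)) (hcm j b)
  · exact le_trans (le_of_eq (dcomm _ _)) (hpm q b)
  · exact le_trans (le_of_eq (dcomm _ _)) (hkm c b)
  · simp only [OD]
    by_cases hbd : b = d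
    · subst hbd; simp [dself]
    · rw [if_neg hbd]
      show (G).dist (pnm b) (pnm d) ≤ 2
      refine le_trans (tri _ (pth ⟨l - 1, by omega⟩) _) ?_
      have h1 := hpm ⟨l - 1, by omega⟩ b
      have h2 := hpm ⟨l - 1, by omega⟩ d
      simp only [hlast] at h1 h2
      have hc := dcomm (pnm b) (pth ⟨l - 1, by omega⟩)
      omega

lemma OD_le_walk (hl : 1 ≤ l) : ∀ (y x : OV k l m) (w : (G).Walk x y),
    OD k l m x y ≤ w.length := by
  intro y x w
  induction w with
  | nil =>
    rename_i x
    rcases x with i | p | a | b <;> simp [OD]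
  | cons hadj w' ih =>
    simp only [SimpleGraph.Walk.length_cons]
    refine le_trans (OD_lip k l m hl _ _ _ hadj) ?_
    omega

lemma dist_eq_OD (hl : 1 ≤ l) (x y : OV k l m) : (G).dist x y = OD k l m x y := by
  refine le_antisymm (dist_le_OD hl x y) ?_
  obtain ⟨w, hw⟩ := ((reach_cyc1 hl x).trans (reach_cyc1 hl y).symm).exists_walk_length_eq_dist
  rw [← hw]
  exact OD_le_walk hl y x w

end Walks

lemma total_sum (k l m : ℕ) :
    (∑ x : OV k l m, ∑ y : OV k l m, OD k l m x y) =
      8 + 8 * l + 6 * (∑ i : Fin l, (i : ℕ)) + 10 * k + m * (6 * l + 8)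
      + ((∑ p : Fin l, ∑ q : Fin l, ((p : ℕ) - (q : ℕ))) +
         (∑ p : Fin l, ∑ q : Fin l, ((q : ℕ) - (p : ℕ))))
      + 2 * k * (∑ i : Fin l, (i : ℕ)) + 6 * k * l
      + 2 * m * (∑ i : Fin l, (l - (i : ℕ)))
      + (∑ a : Fin k, ∑ b : Fin k, if a = b then (0:ℕ) else 2)
      + 2 * k * m * (l + 3)
      + (∑ a : Fin m, ∑ b : Fin m, if a = b then (0:ℕ) else 2) := by
  simp only [Fintype.sum_sum_type, OD, Fin.sum_univ_three, Finset.sum_const, Finset.card_univ,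
    Fintype.card_fin, smul_eq_mul, mul_add, add_mul, Finset.sum_add_distrib, Fin.reduceEq,
    reduceIte, or_true, true_or, false_or, or_false, or_self, if_true, if_false, ← Finset.mul_sum]
  ring

lemma sum_id_range (n : ℕ) : (∑ i ∈ Finset.range n, i) * 2 + n = n * n := by
  induction n with
  | zero => simp
  | succ n ih =>
    rw [Finset.sum_range_succ]
    zify at ih ⊢
    linarith

lemma sum_rev_range (n : ℕ) : (∑ i ∈ Finset.range n, (n - i)) = (∑ i ∈ Finset.range n, i) + n := by
  induction n with
  | zero => simp
  | succ n ih =>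
    rw [Finset.sum_range_succ, Finset.sum_range_succ (f := fun i => i)]
    have h1 : ∑ i ∈ Finset.range n, (n + 1 - i) = (∑ i ∈ Finset.range n, (n - i)) + n := by
      have h2 : ∀ i ∈ Finset.range n, n + 1 - i = (n - i) + 1 := by
        intro i hi; rw [Finset.mem_range] at hi; omega
      rw [Finset.sum_congr rfl h2, Finset.sum_add_distrib, Finset.sum_const, Finset.card_range,
        smul_eq_mul, mul_one]
    omega

lemma sum_abs_range (n : ℕ) :
    ((∑ p ∈ Finset.range n, ∑ q ∈ Finset.range n, (p - q)) +
     (∑ p ∈ Finset.range n, ∑ q ∈ Finset.range n, (q - p))) * 3 + n = n * n * n := by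
  induction n with
  | zero => simp
  | succ n ih =>
    have hrow : ∀ p ∈ Finset.range n, (∑ q ∈ Finset.range (n+1), (p - q)) =
        ∑ q ∈ Finset.range n, (p - q) := by
      intro p hp; rw [Finset.mem_range] at hp
      rw [Finset.sum_range_succ]
      omega
    have hrow2 : ∀ p ∈ Finset.range n, (∑ q ∈ Finset.range (n+1), (q - p)) =
        (∑ q ∈ Finset.range n, (q - p)) + (n - p) := by
      intro p hp
      rw [Finset.sum_range_succ]
    have e1 : (∑ p ∈ Finset.range (n+1), ∑ q ∈ Finset.range (n+1), (p - q)) =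
        (∑ p ∈ Finset.range n, ∑ q ∈ Finset.range n, (p - q)) + ∑ q ∈ Finset.range n, (n - q) := by
      rw [Finset.sum_range_succ, Finset.sum_congr rfl hrow, Finset.sum_range_succ]
      omega
    have e2 : (∑ p ∈ Finset.range (n+1), ∑ q ∈ Finset.range (n+1), (q - p)) =
        (∑ p ∈ Finset.range n, ∑ q ∈ Finset.range n, (q - p)) + ∑ p ∈ Finset.range n, (n - p) := by
      rw [Finset.sum_range_succ, Finset.sum_congr rfl hrow2, Finset.sum_add_distrib,
        Finset.sum_range_succ]
      have : ∀ q ∈ Finset.range n, q - n = 0 := by intro q hq; rw [Finset.mem_range] at hq; omega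
      rw [Finset.sum_congr rfl this]
      simp
    rw [e1, e2, sum_rev_range]
    have hid := sum_id_range n
    zify at ih hid ⊢
    linarith

lemma sum_id_fin (l : ℕ) : (∑ i : Fin l, (i : ℕ)) * 2 + l = l * l := by
  rw [Fin.sum_univ_eq_sum_range (fun i => i) l]; exact sum_id_range l

lemma sum_rev_fin (l : ℕ) : (∑ i : Fin l, (l - (i : ℕ))) = (∑ i : Fin l, (i : ℕ)) + l := by
  rw [Fin.sum_univ_eq_sum_range (fun i => l - i) l, Fin.sum_univ_eq_sum_range (fun i => i) l]
  exact sum_rev_range l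

lemma sum_abs_fin (l : ℕ) :
    ((∑ p : Fin l, ∑ q : Fin l, ((p : ℕ) - (q : ℕ))) +
     (∑ p : Fin l, ∑ q : Fin l, ((q : ℕ) - (p : ℕ)))) * 3 + l = l * l * l := by
  have c1 : (∑ p : Fin l, ∑ q : Fin l, ((p : ℕ) - (q : ℕ))) =
      ∑ p ∈ Finset.range l, ∑ q ∈ Finset.range l, (p - q) := by
    rw [Fin.sum_univ_eq_sum_range (fun i => ∑ q : Fin l, (i - (q : ℕ))) l]
    exact Finset.sum_congr rfl fun p _ => Fin.sum_univ_eq_sum_range (fun j => p - j) l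
  have c2 : (∑ p : Fin l, ∑ q : Fin l, ((q : ℕ) - (p : ℕ))) =
      ∑ p ∈ Finset.range l, ∑ q ∈ Finset.range l, (q - p) := by
    rw [Fin.sum_univ_eq_sum_range (fun i => ∑ q : Fin l, ((q : ℕ) - i)) l]
    exact Finset.sum_congr rfl fun p _ => Fin.sum_univ_eq_sum_range (fun j => j - p) l
  rw [c1, c2]
  exact sum_abs_range l

lemma diag_sum (n : ℕ) :
    (∑ a : Fin n, ∑ b : Fin n, if a = b then (0:ℕ) else 2) + 2 * n = 2 * (n * n) := by
  have h : ∀ a : Fin n, (∑ b : Fin n, if a = b then (0:ℕ) else 2) + 2 = 2 * n := by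
    intro a
    have h1 : (∑ b : Fin n, if a = b then (2:ℕ) else 0) = 2 := by
      simp [Finset.sum_ite_eq]
    calc (∑ b : Fin n, if a = b then (0:ℕ) else 2) + 2
        = (∑ b : Fin n, if a = b then (0:ℕ) else 2) +
          ∑ b : Fin n, if a = b then (2:ℕ) else 0 := by rw [h1]
      _ = ∑ b : Fin n, ((if a = b then (0:ℕ) else 2) + if a = b then (2:ℕ) else 0) :=
          (Finset.sum_add_distrib).symm
      _ = ∑ _b : Fin n, (2:ℕ) := Finset.sum_congr rfl fun b _ => by split_ifs <;> rfl
      _ = 2 * n := by simp [mul_comm]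
  have h2 : ∑ a : Fin n, ((∑ b : Fin n, if a = b then (0:ℕ) else 2) + 2) =
      ∑ _a : Fin n, 2 * n := Finset.sum_congr rfl fun a _ => by rw [h a]
  rw [Finset.sum_add_distrib] at h2
  simp only [Finset.sum_const, Finset.card_univ, Fintype.card_fin, smul_eq_mul] at h2
  zify at h2 ⊢
  linarith


set_option maxHeartbeats 2000000 in
/-- the Wiener index of the onion graph `On(k,l,m)`. -/
theorem wienerIndex_onion (k l m : ℕ) (hl : 1 ≤ l) :
    wienerIndex (onionGraph k l m) =
      k ^ 2 + 7 * k + 8 + (l ^ 3 - l) / 6 + m ^ 2 + m * ((l ^ 2 + l - 2) / 2) +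
        (k + 3) * ((l ^ 2 - l) / 2 + m * l) + (l + m - 1) * (3 * k + 4) := by
  obtain ⟨n, rfl⟩ : ∃ n, l = n + 1 := ⟨l - 1, by omega⟩
  have hdist := dist_eq_OD (k := k) (l := n + 1) (m := m) (by omega)
  rw [wienerIndex]
  have hrw : (∑ u : OV k (n+1) m, ∑ v : OV k (n+1) m, (onionGraph k (n+1) m).dist u v)
      = ∑ x : OV k (n+1) m, ∑ y : OV k (n+1) m, OD k (n+1) m x y :=
    Finset.sum_congr rfl fun x _ => Finset.sum_congr rfl fun y _ => hdist x y
  rw [hrw, total_sum]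
  -- arithmetic facts
  have hA := sum_id_fin (n + 1)
  have hS := sum_abs_fin (n + 1)
  have hle3 : (n + 1) ≤ (n + 1) ^ 3 := Nat.le_self_pow (by norm_num) _
  have hle2 : (n + 1) ≤ (n + 1) ^ 2 := Nat.le_self_pow (by norm_num) _
  have hpos2 : 0 < (n + 1) ^ 2 := pow_pos (by omega) 2
  -- divisibility of l^3 - l by 6
  obtain ⟨c, hc6⟩ : (6 : ℕ) ∣ (n + 1) ^ 3 - (n + 1) := by
    have e2 : (n + 1) ^ 3 = (n + 2) * ((n + 1) * (n * 1)) + (n + 1) := by ring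
    have easc : Nat.ascFactorial n 3 = (n + 2) * ((n + 1) * (n * 1)) := rfl
    have e3 : (n + 1) ^ 3 - (n + 1) = Nat.ascFactorial n 3 := by
      rw [e2, easc, Nat.add_sub_cancel]
    rw [e3]
    have h6 := Nat.factorial_dvd_ascFactorial n 3
    norm_num [Nat.factorial] at h6
    exact h6
  have hc6z : ((n : ℤ) + 1) ^ 3 - (n + 1) = 6 * c := by zify [hle3] at hc6; push_cast at hc6 ⊢; linarith
  have hS2 : ((∑ p : Fin (n+1), ∑ q : Fin (n+1), ((p : ℕ) - (q : ℕ))) +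
      (∑ p : Fin (n+1), ∑ q : Fin (n+1), ((q : ℕ) - (p : ℕ)))) = 2 * c := by
    zify at hS
    push_cast at hS
    nlinarith [hc6z, hS]
  rw [hS2, hc6, Nat.mul_div_cancel_left c (by norm_num : 0 < 6)]
  have h2 : (n + 1) ^ 2 + (n + 1) - 2 = 2 * ((∑ i : Fin (n+1), (i : ℕ)) + n) := by
    zify [show 2 ≤ (n + 1) ^ 2 + (n + 1) by omega]
    zify at hA
    push_cast at hA ⊢
    nlinarith [hA]
  have h3 : (n + 1) ^ 2 - (n + 1) = 2 * (∑ i : Fin (n+1), (i : ℕ)) := by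
    zify [hle2]
    zify at hA
    push_cast at hA ⊢
    nlinarith [hA]
  rw [h2, Nat.mul_div_cancel_left _ (by norm_num : 0 < 2),
    h3, Nat.mul_div_cancel_left _ (by norm_num : 0 < 2),
    show (n + 1) + m - 1 = n + m from by omega,
    sum_rev_fin (n + 1)]
  apply Nat.div_eq_of_eq_mul_left (by norm_num : 0 < 2)
  have hDK := diag_sum k
  have hDM := diag_sum m
  zify at hDK hDM ⊢
  push_cast at hDK hDM ⊢
  linear_combination hDK + hDM
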